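/- For every integer R ≥ 1, as y → 0⁺ one has M(y) = Σ_{r=1}^{R} r (φ_r(y) − φ_{r−1}(y)) + O(y^{R+1}); that is, there exist constants C > 0 and y₀ > 0 such that |M(y) − Σ_{r=1}^{R} r (φ_r(y) − φ_{r−1}(y))| ≤ C y^{R+1} for all 0 < y < y₀. -/

import Mathlib

open scoped BigOperators

/-- `σ` has an increasing subsequence of length `l`. -/
def hasIncSubseq (k : ℕ) (σ : Equiv.Perm (Fin k)) (l : ℕ) : Prop :=
  ∃ s : Fin l → Fin k, StrictMono s ∧ StrictMono (⇑σ ∘ s)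

/-- `f k r`: the number of permutations of `{1,…,k}` all of whose increasing
subsequences have length at most `r`. -/
noncomputable def f (k r : ℕ) : ℕ :=
  Nat.card {σ : Equiv.Perm (Fin k) // ∀ l, hasIncSubseq k σ l → l ≤ r}

/-- `D r t = Σ_{k≥0} f_{k,r} t^{2k}/(k!)²`. -/
noncomputable def D (r : ℕ) (t : ℝ) : ℝ :=
  ∑' k : ℕ, (f k r : ℝ) * t ^ (2 * k) / ((Nat.factorial k : ℝ)) ^ 2

/-- `F(r;y) = e^{-y} Σ_{k≥r} R_{k,r} y^k/(k!)²` with `R_{k,r} = k! - f_{k,r-1}`. -/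
noncomputable def Fdist (r : ℕ) (y : ℝ) : ℝ :=
  Real.exp (-y) *
    ∑' k : ℕ, (((r + k).factorial : ℝ) - (f (r + k) (r - 1) : ℝ)) * y ^ (r + k)
      / (((r + k).factorial : ℝ)) ^ 2

/-- `b j t = I_j(2t) = Σ_{m≥0} t^{2m+j}/(m!(m+j)!)`. -/
noncomputable def b (j : ℕ) (t : ℝ) : ℝ :=
  ∑' m : ℕ, t ^ (2 * m + j) / ((Nat.factorial m : ℝ) * (Nat.factorial (m + j) : ℝ))

/-- `φ_r(y) = e^{-y} D_r(√y)`. -/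
noncomputable def phi (r : ℕ) (y : ℝ) : ℝ := Real.exp (-y) * D r (Real.sqrt y)

/-- First moment `M(y) = Σ_{r≥0} (1 - φ_r(y))`. -/
noncomputable def M (y : ℝ) : ℝ := ∑' r : ℕ, (1 - phi r y)

/-- Second moment `S(y) = Σ_{r≥0} (2r+1)(1 - φ_r(y))`. -/
noncomputable def S (y : ℝ) : ℝ := ∑' r : ℕ, (2 * (r : ℝ) + 1) * (1 - phi r y)

/-- Variance `V(y) = S(y) - M(y)²`. -/
noncomputable def V (y : ℝ) : ℝ := S y - (M y) ^ 2

/-!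
`1 - φ_r(y) = e^{-y} Σ_k (1 - f_{k,r}/k!) y^k/k!`, and `f_{k,r} = k!` for `k ≤ r`, so
`1 - φ_r(y)` is a nonnegative Poisson tail bounded by `y^{r+1}`. Summation by parts turns the
finite sum into `Σ_{r<R} (1 - φ_r) - R (1 - φ_R)`, so the error is
`Σ_{r≥R} (1 - φ_r(y)) + R (1 - φ_R(y))`, which the geometric series bounds by `(R + 2) y^{R+1}`
for `y < 1/2`.
-/

open Nat Real

lemma hasIncSubseq.le {k : ℕ} {σ : Equiv.Perm (Fin k)} {l : ℕ} (h : hasIncSubseq k σ l) :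
    l ≤ k := by
  obtain ⟨s, hs, -⟩ := h
  simpa using Fintype.card_le_of_injective s hs.injective

lemma f_le_factorial (k r : ℕ) : f k r ≤ k ! := by
  simpa [f, Nat.card_eq_fintype_card, Fintype.card_perm] using
    Finite.card_subtype_le fun σ : Equiv.Perm (Fin k) => ∀ l, hasIncSubseq k σ l → l ≤ r

lemma f_eq_factorial {k r : ℕ} (h : k ≤ r) : f k r = k ! := by
  have hall : ∀ σ : Equiv.Perm (Fin k), ∀ l, hasIncSubseq k σ l → l ≤ r :=
    fun _ _ hl ↦ hl.le.trans h
  rw [f, Nat.card_congr (Equiv.subtypeUnivEquiv hall), Nat.card_eq_fintype_card,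
    Fintype.card_perm, Fintype.card_fin]

lemma f_div_factorial_le_one (k r : ℕ) : (f k r / k ! : ℝ) ≤ 1 :=
  div_le_one_of_le₀ (mod_cast f_le_factorial k r) (by positivity)

lemma Real.hasSum_pow_div_factorial (x : ℝ) : HasSum (fun n ↦ x ^ n / n !) (exp x) := by
  simpa [← Real.exp_eq_exp_ℝ] using NormedSpace.expSeries_div_hasSum_exp x

lemma exp_neg_mul_tsum_le_pow {c : ℕ → ℝ} {r : ℕ} {y : ℝ} (hy : 0 ≤ y) (hc0 : ∀ k, 0 ≤ c k)
    (hc1 : ∀ k, c k ≤ 1) (hcr : ∀ k ≤ r, c k = 0) :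
    exp (-y) * ∑' k, c k * (y ^ k / k !) ≤ y ^ (r + 1) := by
  have hsum : Summable fun k ↦ c k * (y ^ k / k !) :=
    (Real.summable_pow_div_factorial y).of_nonneg_of_le
      (fun k ↦ mul_nonneg (hc0 k) (by positivity))
      fun k ↦ mul_le_of_le_one_left (by positivity) (hc1 k)
  have htail : ∑' k, c k * (y ^ k / k !)
      = ∑' j, c (j + (r + 1)) * (y ^ (j + (r + 1)) / (j + (r + 1))!) := by
    rw [← hsum.sum_add_tsum_nat_add (r + 1), Finset.sum_eq_zero fun k hk ↦ by
      rw [hcr k (Finset.mem_range_succ_iff.mp hk), zero_mul], zero_add]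
  have hle : ∑' j, c (j + (r + 1)) * (y ^ (j + (r + 1)) / (j + (r + 1))!)
      ≤ y ^ (r + 1) * exp y := by
    rw [← (Real.hasSum_pow_div_factorial y).tsum_eq, ← tsum_mul_left]
    refine ((summable_nat_add_iff (r + 1)).mpr hsum).tsum_le_tsum (fun j ↦ ?_)
      ((Real.summable_pow_div_factorial y).mul_left _)
    calc c (j + (r + 1)) * (y ^ (j + (r + 1)) / (j + (r + 1))!)
        ≤ y ^ (j + (r + 1)) / (j + (r + 1))! := mul_le_of_le_one_left (by positivity) (hc1 _)
      _ ≤ y ^ (j + (r + 1)) / j ! := by gcongr; omega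
      _ = y ^ (r + 1) * (y ^ j / j !) := by rw [pow_add]; ring
  calc exp (-y) * ∑' k, c k * (y ^ k / k !) ≤ exp (-y) * (y ^ (r + 1) * exp y) := by
        rw [htail]; gcongr
    _ = y ^ (r + 1) := by rw [mul_left_comm, ← exp_add, neg_add_cancel, exp_zero, mul_one]

lemma one_sub_phi_eq (r : ℕ) {y : ℝ} (hy : 0 ≤ y) :
    1 - phi r y = exp (-y) * ∑' k, (1 - f k r / k !) * (y ^ k / k !) := by
  have hD : D r (√y) = ∑' k, (f k r / k !) * (y ^ k / k !) := by
    refine tsum_congr fun k ↦ ?_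
    rw [pow_mul, sq_sqrt hy]
    ring
  have hsum : Summable fun k ↦ (f k r / k ! : ℝ) * (y ^ k / k !) :=
    (Real.summable_pow_div_factorial y).of_nonneg_of_le (fun k ↦ by positivity)
      fun k ↦ mul_le_of_le_one_left (by positivity) (f_div_factorial_le_one k r)
  simp_rw [sub_mul, one_mul]
  rw [phi, hD, (Real.summable_pow_div_factorial y).tsum_sub hsum,
    (Real.hasSum_pow_div_factorial y).tsum_eq, mul_sub, ← exp_add, neg_add_cancel, exp_zero]

lemma one_sub_phi_nonneg (r : ℕ) {y : ℝ} (hy : 0 ≤ y) : 0 ≤ 1 - phi r y := by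
  rw [one_sub_phi_eq r hy]
  exact mul_nonneg (exp_pos _).le <| tsum_nonneg fun k ↦
    mul_nonneg (sub_nonneg.mpr (f_div_factorial_le_one k r)) (by positivity)

lemma one_sub_phi_le_pow (r : ℕ) {y : ℝ} (hy : 0 ≤ y) : 1 - phi r y ≤ y ^ (r + 1) := by
  rw [one_sub_phi_eq r hy]
  refine exp_neg_mul_tsum_le_pow hy (fun k ↦ ?_) (fun k ↦ ?_) (fun k hk ↦ ?_)
  · exact sub_nonneg.mpr (f_div_factorial_le_one k r)
  · have : (0 : ℝ) ≤ f k r / k ! := by positivity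
    linarith
  · rw [f_eq_factorial hk, div_self (by positivity), sub_self]

lemma sum_Icc_mul_sub_eq (p : ℕ → ℝ) (R : ℕ) :
    ∑ r ∈ Finset.Icc 1 R, (r : ℝ) * (p r - p (r - 1))
      = ∑ r ∈ Finset.range R, (1 - p r) - R * (1 - p R) := by
  induction R with
  | zero => simp
  | succ n ih =>
    rw [Finset.sum_Icc_succ_top (Nat.le_add_left 1 n), ih, Finset.sum_range_succ,
      Nat.add_sub_cancel]
    push_cast
    ring

lemma summable_of_le_pow {G : ℕ → ℝ} {y : ℝ} (hy0 : 0 ≤ y) (hy1 : y < 1)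
    (hG0 : ∀ r, 0 ≤ G r) (hG : ∀ r, G r ≤ y ^ (r + 1)) : Summable G :=
  ((summable_geometric_of_lt_one hy0 hy1).mul_left y).of_nonneg_of_le hG0
    fun r ↦ (hG r).trans_eq (pow_succ' y r)

lemma tsum_nat_add_le_of_le_pow {G : ℕ → ℝ} {y : ℝ} (hy0 : 0 ≤ y) (hy1 : y < 1)
    (hG0 : ∀ r, 0 ≤ G r) (hG : ∀ r, G r ≤ y ^ (r + 1)) (R : ℕ) :
    ∑' j, G (j + R) ≤ y ^ (R + 1) / (1 - y) := by
  calc ∑' j, G (j + R) ≤ ∑' j, y ^ (R + 1) * y ^ j :=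
        ((summable_nat_add_iff R).mpr (summable_of_le_pow hy0 hy1 hG0 hG)).tsum_le_tsum
          (fun j ↦ (hG (j + R)).trans_eq (by ring))
          ((summable_geometric_of_lt_one hy0 hy1).mul_left _)
    _ = y ^ (R + 1) / (1 - y) := by
        rw [tsum_mul_left, tsum_geometric_of_lt_one hy0 hy1, div_eq_mul_inv]

theorem stmt14_general (R : ℕ) :
    ∃ C > (0 : ℝ), ∃ y₀ > (0 : ℝ), ∀ y : ℝ, 0 < y → y < y₀ →
      |M y - ∑ r ∈ Finset.Icc 1 R, (r : ℝ) * (phi r y - phi (r - 1) y)| ≤ C * y ^ (R + 1) := by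
  refine ⟨R + 2, by positivity, 1 / 2, by norm_num, fun y hy hy2 ↦ ?_⟩
  have hG0 (r : ℕ) : 0 ≤ 1 - phi r y := one_sub_phi_nonneg r hy.le
  have hG (r : ℕ) : 1 - phi r y ≤ y ^ (r + 1) := one_sub_phi_le_pow r hy.le
  have hy1 : y < 1 := by linarith
  have htail := tsum_nat_add_le_of_le_pow hy.le hy1 hG0 hG R
  have herror : M y - ∑ r ∈ Finset.Icc 1 R, (r : ℝ) * (phi r y - phi (r - 1) y)
      = ∑' j, (1 - phi (j + R) y) + R * (1 - phi R y) := by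
    rw [sum_Icc_mul_sub_eq, M, ← (summable_of_le_pow hy.le hy1 hG0 hG).sum_add_tsum_nat_add R]
    ring
  have hgeo : y ^ (R + 1) / (1 - y) ≤ 2 * y ^ (R + 1) := by
    rw [div_le_iff₀ (by linarith)]
    nlinarith [pow_pos hy (R + 1)]
  rw [herror, abs_of_nonneg <|
    add_nonneg (tsum_nonneg fun j ↦ hG0 _) (mul_nonneg R.cast_nonneg (hG0 R))]
  have := mul_le_mul_of_nonneg_left (hG R) R.cast_nonneg
  linarith

theorem stmt14 (R : ℕ) (hR : 1 ≤ R) :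
    ∃ C > (0 : ℝ), ∃ y₀ > (0 : ℝ), ∀ y : ℝ, 0 < y → y < y₀ →
      |M y - ∑ r ∈ Finset.Icc 1 R, (r : ℝ) * (phi r y - phi (r - 1) y)| ≤ C * y ^ (R + 1) :=
  stmt14_general R
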